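/- Let T be an m×n matrix over a field, let T' be T with its i-th row deleted, and suppose rank(T) > rank(T'). Then for any row vectors g, g' of length m and row vector u of length n, if g·T = u and g'·T = u, then g and g' agree in their i-th entry. -/

import Mathlib

/-! A relation `d ᵥ* T = 0` with `d i ≠ 0` expresses row `i` of `T` through the other rows, so
deleting that row keeps the row span, hence the rank. Applied to `d = g - g'`, a rank drop
forces `g i = g' i`. -/

open Matrix Submodule

theorem Matrix.row_mem_span_image_compl_of_vecMul_eq_zero {ι n F : Type*} [Fintype ι]
    [DecidableEq ι] [Field F] {T : Matrix ι n F} {d : ι → F} (hd : d ᵥ* T = 0) {i : ι}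
    (hi : d i ≠ 0) : T.row i ∈ span F (T.row '' {i}ᶜ) := by
  have hrel : d i • T i + ∑ k ∈ {i}ᶜ, d k • T k = 0 := by
    rw [← Fintype.sum_eq_add_sum_compl i (fun k => d k • T k), ← vecMul_eq_sum, hd]
  have hTi : T i = -(d i)⁻¹ • ∑ k ∈ {i}ᶜ, d k • T k := by
    rw [eq_neg_of_add_eq_zero_right hrel, smul_neg, neg_smul, neg_neg, smul_smul,
      inv_mul_cancel₀ hi, one_smul]
  rw [row_apply', hTi]
  refine smul_mem _ _ (sum_mem fun k hk => smul_mem _ _ (subset_span ⟨k, ?_, rfl⟩))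
  simpa using hk

theorem Matrix.rank_submatrix_succAbove_eq_of_mem_span {n F : Type*} [Fintype n] [Field F]
    {m : ℕ} {T : Matrix (Fin (m + 1)) n F} {i : Fin (m + 1)}
    (hi : T.row i ∈ span F (T.row '' {i}ᶜ)) : (T.submatrix i.succAbove id).rank = T.rank := by
  have hrange : Set.range (T.submatrix i.succAbove id).row = T.row '' {i}ᶜ := by
    rw [← Fin.range_succAbove, ← Set.range_comp]
    rfl
  rw [rank_eq_finrank_span_row, rank_eq_finrank_span_row, hrange, ← span_insert_eq_span hi,
    Set.insert_image_compl_eq_range]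

theorem Matrix.apply_eq_zero_of_vecMul_eq_zero_of_rank_submatrix_succAbove_lt {n F : Type*}
    [Fintype n] [Field F] {m : ℕ} {T : Matrix (Fin (m + 1)) n F} {i : Fin (m + 1)}
    (h : (T.submatrix i.succAbove id).rank < T.rank) {d : Fin (m + 1) → F} (hd : d ᵥ* T = 0) :
    d i = 0 := by
  by_contra hi
  exact h.ne (rank_submatrix_succAbove_eq_of_mem_span
    (row_mem_span_image_compl_of_vecMul_eq_zero hd hi))

/-- If deleting row `i` drops the rank, then the `i`-th coefficient of a row vector `g`
is uniquely determined by the product `Matrix.vecMul g T`. -/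
theorem stmt1 {F : Type*} [Field F] {m n : ℕ} (T : Matrix (Fin (m + 1)) (Fin n) F)
    (i : Fin (m + 1))
    (h : (T.submatrix i.succAbove id).rank < T.rank)
    (g g' : Fin (m + 1) → F) (u : Fin n → F)
    (hg : Matrix.vecMul g T = u) (hg' : Matrix.vecMul g' T = u) :
    g i = g' i := by
  have hd : (g - g') ᵥ* T = 0 := by rw [sub_vecMul, hg, hg', sub_self]
  exact sub_eq_zero.mp (apply_eq_zero_of_vecMul_eq_zero_of_rank_submatrix_succAbove_lt h hd)
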